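/- arXiv:0812.4784 — 11 statements merged into one kernel-verified Lean document; each statement's English description precedes it below -/
import Mathlib

section
/- For every natural number n, the following identity of binomial coefficients holds (Barrucand's identity): ∑_{k=0}^{n} C(n,k) · (∑_{j=0}^{k} C(k,j)^3) = ∑_{k=0}^{n} C(n,k)^2 · C(2k,k). -/
/-!
Expanding `C(k,j)²` inside `C(k,j)³` by Vandermonde and trinomial revision turns the
Franel sum into `∑ₘ C(k,2m) C(2m,m) C(2k-2m,k-m)`, whose reflection is
`∑ⱼ C(k,j) C(j,k-j) C(2j,j)`.
In the binomial transform of this, trinomial revision pulls a factor `C(n,j)` out of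
`∑ₖ C(n,k) C(k,j) C(j,k-j)`, and Vandermonde sums what is left to a second `C(n,j)`.
-/

open Finset

theorem Finset.sum_range_triangle_comm {M : Type*} [AddCommMonoid M] (N : ℕ)
    (f : ℕ → ℕ → M) :
    ∑ k ∈ range N, ∑ j ∈ range (k + 1), f k j =
      ∑ j ∈ range N, ∑ s ∈ range (N - j), f (j + s) j := by
  rw [← sum_range_diag_flip]
  refine sum_congr rfl fun k _ => sum_congr rfl fun j hj => ?_
  rw [Nat.add_sub_cancel' (Nat.lt_succ_iff.mp (mem_range.mp hj))]

namespace Nat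

theorem choose_mul_choose_sub_comm (k i t : ℕ) :
    k.choose i * (k - i).choose t = k.choose t * (k - t).choose i := by
  have hi := choose_mul (n := k) (le_add_right i t)
  have ht := choose_mul (n := k) (le_add_left t i)
  rw [Nat.add_sub_cancel_left] at hi
  rw [Nat.add_sub_cancel] at ht
  rw [← hi, ← ht, choose_symm_add]

theorem choose_two_mul_mul_choose (n t : ℕ) :
    n.choose (2 * t) * (2 * t).choose t = n.choose t * (n - t).choose t := by
  rw [choose_mul (by omega), two_mul, Nat.add_sub_cancel]

theorem sum_range_choose_mul_choose_sub (a b s : ℕ) :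
    ∑ m ∈ range (s + 1), a.choose m * b.choose (s - m) = (a + b).choose s := by
  rw [add_choose_eq, Finset.Nat.sum_antidiagonal_eq_sum_range_succ_mk]

theorem sum_range_choose_mul_choose (a b : ℕ) :
    ∑ m ∈ range (a + 1), a.choose m * b.choose m = (a + b).choose b := by
  rw [← choose_symm_add, add_comm a b, ← sum_range_choose_mul_choose_sub]
  refine sum_congr rfl fun m hm => ?_
  rw [mul_comm, choose_symm (Nat.lt_succ_iff.mp (mem_range.mp hm))]

theorem choose_sq_eq_sum {k j : ℕ} (hjk : j ≤ k) :
    k.choose j ^ 2 =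
      ∑ m ∈ range (j + 1),
        k.choose (j - m) * (k - (j - m)).choose (2 * m) * (2 * m).choose m := by
  have hvand : k.choose j = ∑ m ∈ range (j + 1), (k - j).choose m * j.choose (j - m) := by
    rw [sum_range_choose_mul_choose_sub, Nat.sub_add_cancel hjk]
  rw [sq]
  nth_rw 2 [hvand]
  rw [mul_sum]
  refine sum_congr rfl fun m hm => ?_
  have hmj : m ≤ j := Nat.lt_succ_iff.mp (mem_range.mp hm)
  have hrev : k.choose j * j.choose (j - m) = k.choose (j - m) * (k - (j - m)).choose m := by
    rw [choose_mul (Nat.sub_le j m), Nat.sub_sub_self hmj]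
  have hsub : k - j = k - (j - m) - m := by omega
  calc k.choose j * ((k - j).choose m * j.choose (j - m))
      = k.choose j * j.choose (j - m) * (k - (j - m) - m).choose m := by rw [hsub]; ring
    _ = k.choose (j - m) * ((k - (j - m)).choose m * (k - (j - m) - m).choose m) := by
        rw [hrev, mul_assoc]
    _ = _ := by rw [← choose_two_mul_mul_choose, mul_assoc]

theorem sum_range_choose_add_mul_choose_mul_choose (k m : ℕ) :
    ∑ i ∈ range (k + 1 - m), k.choose (m + i) * (k.choose i * (k - i).choose (2 * m)) =
      k.choose (2 * m) * (2 * (k - m)).choose (k - m) := by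
  rcases le_or_gt (2 * m) k with hmk | hkm
  · calc ∑ i ∈ range (k + 1 - m), k.choose (m + i) * (k.choose i * (k - i).choose (2 * m))
        = ∑ i ∈ range (k - m + 1),
            k.choose (2 * m) * ((k - 2 * m).choose i * k.choose (k - m - i)) := by
          rw [show k + 1 - m = k - m + 1 by omega]
          refine sum_congr rfl fun i hi => ?_
          have hmi : m + i ≤ k := by have := mem_range.mp hi; omega
          rw [choose_mul_choose_sub_comm, ← choose_symm hmi, show k - (m + i) = k - m - i by omega]
          ring
      _ = k.choose (2 * m) * (2 * (k - m)).choose (k - m) := by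
          rw [← mul_sum, sum_range_choose_mul_choose_sub,
            show k - 2 * m + k = 2 * (k - m) by omega]
  · rw [choose_eq_zero_of_lt hkm, zero_mul]
    refine sum_eq_zero fun i _ => ?_
    rw [choose_eq_zero_of_lt (by omega : k - i < 2 * m), mul_zero, mul_zero]

theorem sum_range_choose_pow_three (k : ℕ) :
    ∑ j ∈ range (k + 1), k.choose j ^ 3 =
      ∑ m ∈ range (k + 1),
        k.choose (2 * m) * (2 * m).choose m * (2 * (k - m)).choose (k - m) := by
  calc ∑ j ∈ range (k + 1), k.choose j ^ 3
      = ∑ j ∈ range (k + 1), ∑ m ∈ range (j + 1),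
          k.choose j * (k.choose (j - m) * (k - (j - m)).choose (2 * m) * (2 * m).choose m) := by
        refine sum_congr rfl fun j hj => ?_
        rw [pow_succ', choose_sq_eq_sum (Nat.lt_succ_iff.mp (mem_range.mp hj)), mul_sum]
    _ = ∑ m ∈ range (k + 1), (2 * m).choose m * ∑ i ∈ range (k + 1 - m),
          k.choose (m + i) * (k.choose i * (k - i).choose (2 * m)) := by
        rw [sum_range_triangle_comm]
        refine sum_congr rfl fun m _ => ?_
        rw [mul_sum]
        refine sum_congr rfl fun i _ => ?_
        rw [Nat.add_sub_cancel_left]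
        ring
    _ = _ := by
        refine sum_congr rfl fun m _ => ?_
        rw [sum_range_choose_add_mul_choose_mul_choose]
        ring

theorem sum_range_choose_pow_three_eq_sum_choose_mul_choose (k : ℕ) :
    ∑ j ∈ range (k + 1), k.choose j ^ 3 =
      ∑ j ∈ range (k + 1), k.choose j * j.choose (k - j) * (2 * j).choose j := by
  rw [sum_range_choose_pow_three, ← sum_range_reflect]
  refine sum_congr rfl fun j hj => ?_
  have hjk : j ≤ k := Nat.lt_succ_iff.mp (mem_range.mp hj)
  rw [Nat.add_sub_cancel, choose_two_mul_mul_choose, Nat.sub_sub_self hjk, choose_symm hjk]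

theorem sum_range_choose_add_mul_choose_mul_choose_eq_sq {n j : ℕ} (hjn : j ≤ n) :
    ∑ s ∈ range (n + 1 - j), n.choose (j + s) * (j + s).choose j * j.choose s =
      n.choose j ^ 2 := by
  calc ∑ s ∈ range (n + 1 - j), n.choose (j + s) * (j + s).choose j * j.choose s
      = n.choose j * ∑ s ∈ range (n - j + 1), (n - j).choose s * j.choose s := by
        rw [mul_sum, show n + 1 - j = n - j + 1 by omega]
        refine sum_congr rfl fun s _ => ?_
        rw [choose_mul (le_add_right j s), Nat.add_sub_cancel_left, mul_assoc]
    _ = n.choose j ^ 2 := by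
        rw [sum_range_choose_mul_choose, Nat.sub_add_cancel hjn, sq]

end Nat

theorem barrucand_identity (n : ℕ) :
    ∑ k ∈ range (n + 1), n.choose k * ∑ j ∈ range (k + 1), (k.choose j) ^ 3
      = ∑ k ∈ range (n + 1), (n.choose k) ^ 2 * (2 * k).choose k := by
  simp_rw [Nat.sum_range_choose_pow_three_eq_sum_choose_mul_choose, mul_sum,
    sum_range_triangle_comm, Nat.add_sub_cancel_left]
  refine sum_congr rfl fun j hj => ?_
  have hjn : j ≤ n := Nat.lt_succ_iff.mp (mem_range.mp hj)
  rw [← Nat.sum_range_choose_add_mul_choose_mul_choose_eq_sq hjn, sum_mul]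
  refine sum_congr rfl fun s _ => ?_
  ring
end

section
/- For all natural numbers n and a, the following generalization of Barrucand's identity holds: ∑_{k=0}^{n} C(n,k) · (∑_{j=a}^{k} C(k,j)^2 · C(k,j−a)) = ∑_{k=0}^{n} C(n,k)^2 · C(2k,k−a), where in the inner sum on the left j ranges over a ≤ j ≤ k (equivalently, terms with j < a are interpreted as 0) and on the right the term C(2k,k−a) is interpreted as 0 when k < a. -/
/-!
Both sides are coefficients of `x ^ (n - a)` in the `Y ^ n`-coefficient of the `n`-th power of a
quadratic in `Y`: the left side comes from `x Y + (1 + x)(1 + Y)(x + Y)`, the right side from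
`(1 + Y)(x + (1 + x)² Y)`. Written as `a₀ + a₁ Y + a₂ Y²`, both quadratics have `a₁ = x + (1 + x)²`
and `a₀ a₂ = x (1 + x)²`, and the `Y ^ n`-coefficient of `(a₀ + a₁ Y + a₂ Y²) ^ n` only depends on
`a₁` and `a₀ a₂`, since a monomial `a₀ ^ i a₁ ^ j a₂ ^ l` contributing to it has `j + 2 l = n = i + j + l`.
-/

open Finset Polynomial

section CommSemiring

variable {R : Type*} [CommSemiring R]

theorem coeff_C_add_C_mul_X_pow (a b : R) (n k : ℕ) :
    ((C a + C b * X) ^ n).coeff k = n.choose k * a ^ (n - k) * b ^ k := by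
  have hterm (m : ℕ) : ((C b * X) ^ m * C a ^ (n - m) * (n.choose m : R[X])).coeff k
      = if k = m then n.choose m * a ^ (n - m) * b ^ m else 0 := by
    rw [mul_pow, ← C_pow, ← C_pow, ← C_eq_natCast, mul_right_comm, mul_assoc, ← C_mul,
      coeff_mul_C, coeff_C_mul_X_pow]
    split_ifs <;> ring
  simp_rw [add_comm (C a), add_pow, finsetSum_coeff, hterm, sum_ite_eq, mem_range]
  split_ifs with hk
  · rfl
  · simp [Nat.choose_eq_zero_of_lt (not_lt.mp hk)]

theorem coeff_pow_C_add_C_mul_X_sq_self (a b : R) (n : ℕ) :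
    ((C a + C b * X ^ 2) ^ n).coeff n
      = if 2 ∣ n then n.choose (n / 2) * (a * b) ^ (n / 2) else 0 := by
  have hexpand : (C a + C b * X ^ 2) ^ n = expand R 2 ((C a + C b * X) ^ n) := by
    simp only [map_pow, map_add, map_mul, expand_C, expand_X]
  rw [hexpand, coeff_expand two_pos, coeff_C_add_C_mul_X_pow]
  split_ifs
  · rw [show n - n / 2 = n / 2 by omega, mul_pow, mul_assoc]
  · rfl

theorem coeff_pow_C_mul_X_add_self (c : R) (p : R[X]) (n : ℕ) :
    ((C c * X + p) ^ n).coeff n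
      = ∑ k ∈ range (n + 1), n.choose k * c ^ (n - k) * (p ^ k).coeff k := by
  rw [add_comm, add_pow, finsetSum_coeff]
  refine sum_congr rfl fun k hk => ?_
  have hk : k ≤ n := Nat.lt_succ_iff.mp (mem_range.mp hk)
  have hterm : p ^ k * (C c * X) ^ (n - k) * (n.choose k : R[X])
      = C (n.choose k * c ^ (n - k)) * p ^ k * X ^ (n - k) := by
    rw [C_mul, C_pow, ← C_eq_natCast]; ring
  rw [hterm, coeff_mul_X_pow', if_pos (Nat.sub_le n k), Nat.sub_sub_self hk, coeff_C_mul]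

theorem coeff_pow_trinomial_self_eq {a₀ a₂ b₀ b₂ : R} (a₁ : R) (h : a₀ * a₂ = b₀ * b₂) (n : ℕ) :
    ((C a₀ + C a₁ * X + C a₂ * X ^ 2) ^ n).coeff n
      = ((C b₀ + C a₁ * X + C b₂ * X ^ 2) ^ n).coeff n := by
  have hshape (u v w : R[X]) : u + v + w = v + (u + w) := by ring
  simp only [hshape _ (C a₁ * X), coeff_pow_C_mul_X_add_self, coeff_pow_C_add_C_mul_X_sq_self, h]

theorem coeff_pow_one_add_X_mul_self (c d : R) (n : ℕ) :
    (((1 + X) * (C c + C d * X)) ^ n).coeff n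
      = ∑ k ∈ range (n + 1), n.choose k ^ 2 * c ^ (n - k) * d ^ k := by
  rw [mul_pow, mul_comm, coeff_mul, Nat.sum_antidiagonal_eq_sum_range_succ_mk]
  refine sum_congr rfl fun k hk => ?_
  rw [coeff_C_add_C_mul_X_pow, coeff_one_add_X_pow,
    Nat.choose_symm (Nat.lt_succ_iff.mp (mem_range.mp hk))]
  ring

theorem barrucand_generating_identity (x : R) (n : ℕ) :
    ∑ k ∈ range (n + 1),
        (n.choose k : R) * ∑ r ∈ range (k + 1), (k.choose r : R) ^ 2 * x ^ (n - r) * (1 + x) ^ k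
      = ∑ k ∈ range (n + 1), (n.choose k : R) ^ 2 * x ^ (n - k) * (1 + x) ^ (2 * k) := by
  have hA : C x * X + C (1 + x) * ((1 + X) * (C x + C 1 * X))
      = C (x * (1 + x)) + C (x + (1 + x) ^ 2) * X + C (1 + x) * X ^ 2 := by
    simp only [map_mul, map_add, map_one, map_pow]; ring
  have hB : (1 + X) * (C x + C ((1 + x) ^ 2) * X)
      = C x + C (x + (1 + x) ^ 2) * X + C ((1 + x) ^ 2) * X ^ 2 := by
    simp only [map_add, map_one, map_pow]; ring
  calc _ = ((C x * X + C (1 + x) * ((1 + X) * (C x + C 1 * X))) ^ n).coeff n := by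
        rw [coeff_pow_C_mul_X_add_self]
        refine sum_congr rfl fun k hk => ?_
        rw [mul_pow, ← C_pow, coeff_C_mul, coeff_pow_one_add_X_mul_self, mul_sum, mul_sum, mul_sum]
        refine sum_congr rfl fun r hr => ?_
        have hr : r ≤ k := Nat.lt_succ_iff.mp (mem_range.mp hr)
        have hk : k ≤ n := Nat.lt_succ_iff.mp (mem_range.mp hk)
        rw [one_pow, ← Nat.sub_add_sub_cancel hk hr, pow_add]
        ring
    _ = (((1 + X) * (C x + C ((1 + x) ^ 2) * X)) ^ n).coeff n := by
        rw [hA, hB]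
        exact coeff_pow_trinomial_self_eq _ (by ring) n
    _ = _ := by
        rw [coeff_pow_one_add_X_mul_self]
        refine sum_congr rfl fun k _ => ?_
        rw [pow_mul]

theorem coeff_X_pow_sub_mul_X_pow_mul_one_add_X_pow (a k : ℕ) {m n : ℕ} (hm : m ≤ n) :
    (X ^ (n - m) * (X ^ a * (1 + X) ^ k) : R[X]).coeff n
      = if a ≤ m then (k.choose (m - a) : R) else 0 := by
  rw [← mul_assoc, ← pow_add, coeff_X_pow_mul', coeff_one_add_X_pow]
  by_cases ham : a ≤ m
  · rw [if_pos (by omega), if_pos ham, show n - (n - m + a) = m - a by omega]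
  · rw [if_neg (by omega), if_neg ham]

end CommSemiring

theorem generalized_barrucand_identity (n a : ℕ) :
    ∑ k ∈ range (n + 1), n.choose k * ∑ j ∈ Icc a k, (k.choose j) ^ 2 * k.choose (j - a)
      = ∑ k ∈ range (n + 1), (n.choose k) ^ 2 * (if a ≤ k then (2 * k).choose (k - a) else 0) := by
  -- Multiplying by `X ^ a` and reading off `X ^ n` avoids the truncated subtraction `n - a`.
  have key := congrArg (fun p : ℕ[X] => (X ^ a * p).coeff n) (barrucand_generating_identity X n)
  simp only [mul_sum, finsetSum_coeff, ← Nat.cast_pow, mul_assoc, mul_left_comm (X ^ a : ℕ[X]),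
    coeff_natCast_mul, Nat.cast_id] at key
  convert key using 2 with k hk k hk <;> have hk : k ≤ n := Nat.lt_succ_iff.mp (mem_range.mp hk)
  · have hIcc : Icc a k = (range (k + 1)).filter (a ≤ ·) := by
      ext j; simp only [mem_Icc, mem_filter, mem_range]; omega
    rw [hIcc, sum_filter, mul_sum]
    refine sum_congr rfl fun r hr => ?_
    rw [coeff_X_pow_sub_mul_X_pow_mul_one_add_X_pow _ _
      ((Nat.lt_succ_iff.mp (mem_range.mp hr)).trans hk)]
    split_ifs <;> simp only [Nat.cast_id, mul_zero]
  · rw [coeff_X_pow_sub_mul_X_pow_mul_one_add_X_pow _ _ hk, Nat.cast_id]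
end

section
/- For every natural number n: ∑_{k=0}^{n} C(n,k) · C(2k,k) · 2^k = ∑_{k=0}^{n} C(n,k) · C(2n−k,n) · 3^k. -/
/-! Both sides are the coefficient of `X ^ n` in `((X + 2) ^ 2 + X) ^ n = ((X + 1) * (X + 4)) ^ n`:
expanding the left form binomially in `(X + 2) ^ 2` and `X` gives the first sum, expanding
`(X + 4) ^ n = (3 + (X + 1)) ^ n` gives the second. -/

open Finset

namespace Polynomial

variable {R : Type*} [CommSemiring R]

theorem coeff_X_add_C_sq_add_X_pow_self (a : R) (n : ℕ) :
    (((X + C a) ^ 2 + X) ^ n).coeff n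
      = ∑ k ∈ range (n + 1), (n.choose k * (2 * k).choose k : R) * a ^ k := by
  rw [add_pow, finsetSum_coeff]
  refine sum_congr rfl fun k hk => ?_
  have hkn : k ≤ n := Nat.lt_succ_iff.mp (mem_range.mp hk)
  rw [coeff_mul_natCast, coeff_mul_X_pow', if_pos (Nat.sub_le n k), ← pow_mul,
    Nat.sub_sub_self hkn, coeff_X_add_C_pow, show 2 * k - k = k by omega]
  ring

theorem coeff_X_add_one_mul_X_add_one_add_C_pow_self (b : R) (n : ℕ) :
    (((X + 1) * (X + 1 + C b)) ^ n).coeff n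
      = ∑ k ∈ range (n + 1), (n.choose k * (2 * n - k).choose n : R) * b ^ k := by
  rw [mul_pow, add_comm (X + 1) (C b), add_pow (C b), mul_sum, finsetSum_coeff]
  refine sum_congr rfl fun k hk => ?_
  have hkn : k ≤ n := Nat.lt_succ_iff.mp (mem_range.mp hk)
  have hterm : (X + 1 : R[X]) ^ n * (C b ^ k * (X + 1) ^ (n - k) * (n.choose k : R[X]))
      = C (b ^ k * n.choose k) * (X + 1) ^ (2 * n - k) := by
    rw [show 2 * n - k = n + (n - k) by omega, pow_add, C_mul, C_pow, map_natCast]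
    ring
  rw [hterm, coeff_C_mul, coeff_X_add_one_pow]
  ring

end Polynomial

open Polynomial in
theorem hanna_sum_two_eq_three (n : ℕ) :
    ∑ k ∈ range (n + 1), n.choose k * (2 * k).choose k * 2 ^ k
      = ∑ k ∈ range (n + 1), n.choose k * (2 * n - k).choose n * 3 ^ k := by
  have hfactor : ((X + C 2) ^ 2 + X : ℕ[X]) = (X + 1) * (X + 1 + C 3) := by
    rw [map_ofNat C 2, map_ofNat C 3]
    ring
  have h := coeff_X_add_C_sq_add_X_pow_self (2 : ℕ) n
  rw [hfactor, coeff_X_add_one_mul_X_add_one_add_C_pow_self] at h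
  simpa only [Nat.cast_id] using h.symm
end

section
/- For every natural number n: ∑_{k=0}^{n} C(n,k) · C(2n−k,n) · 3^k = ∑_{k=0}^{n} C(n,k)^2 · 4^k. -/
/-!
Writing `C(n, k) C(k, j) = C(n, j) C(n - j, k - j)` and applying Vandermonde's identity gives
`C(n, j) C(2n - j, n) = ∑ₖ C(n, k)² C(k, j)`. Multiplying by `x ^ j` and summing over `j`, the
binomial theorem turns the left-hand side of the theorem into `∑ₖ C(n, k)² (x + 1) ^ k`;
take `x = 3`.
-/

open Finset

namespace Nat

theorem choose_mul_choose_two_mul_sub (n j : ℕ) :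
    n.choose j * (2 * n - j).choose n = ∑ k ∈ range (n + 1), n.choose k ^ 2 * k.choose j := by
  rcases lt_or_ge n j with hnj | hjn
  · rw [choose_eq_zero_of_lt hnj, zero_mul, eq_comm]
    exact sum_eq_zero fun k hk ↦ by
      rw [choose_eq_zero_of_lt (n := k) ((mem_range_succ_iff.1 hk).trans_lt hnj), mul_zero]
  obtain ⟨d, rfl⟩ := exists_add_of_le hjn
  have hvandermonde : (2 * (j + d) - j).choose (j + d) = ∑ m ∈ range (d + 1),
      d.choose m * (j + d).choose (d - m) := by
    rw [choose_symm_of_eq_add (show 2 * (j + d) - j = (j + d) + d by omega),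
      show 2 * (j + d) - j = d + (j + d) by omega, add_choose_eq,
      Nat.sum_antidiagonal_eq_sum_range_succ_mk]
  have hbelow : ∑ k ∈ range j, (j + d).choose k ^ 2 * k.choose j = 0 :=
    sum_eq_zero fun k hk ↦ by rw [choose_eq_zero_of_lt (mem_range.1 hk), mul_zero]
  rw [show j + d + 1 = j + (d + 1) by ring, sum_range_add, hbelow, zero_add, hvandermonde,
    mul_sum]
  refine sum_congr rfl fun m hm ↦ ?_
  have hmd : m ≤ d := mem_range_succ_iff.1 hm
  have hsymm : (j + d).choose (d - m) = (j + d).choose (j + m) :=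
    choose_symm_of_eq_add (by omega)
  have hchoose_mul := choose_mul (n := j + d) (Nat.le_add_right j m)
  rw [Nat.add_sub_cancel_left, Nat.add_sub_cancel_left] at hchoose_mul
  rw [hsymm, ← mul_assoc, ← hchoose_mul]
  ring

end Nat

theorem sum_range_choose_mul_pow_of_le {R : Type*} [CommSemiring R] {k n : ℕ} (hkn : k ≤ n)
    (x : R) : ∑ j ∈ range (n + 1), (k.choose j : R) * x ^ j = (x + 1) ^ k := by
  rw [add_pow, ← sum_subset (range_subset_range.2 (Nat.succ_le_succ hkn))]
  · exact sum_congr rfl fun j _ ↦ by rw [one_pow, mul_one, mul_comm]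
  · intro j _ hj
    rw [Nat.choose_eq_zero_of_lt (by simpa using hj), Nat.cast_zero, zero_mul]

theorem sum_choose_mul_choose_two_mul_sub_mul_pow {R : Type*} [CommSemiring R] (n : ℕ) (x : R) :
    ∑ j ∈ range (n + 1), (n.choose j * (2 * n - j).choose n : R) * x ^ j
      = ∑ k ∈ range (n + 1), (n.choose k ^ 2 : R) * (x + 1) ^ k := by
  simp_rw [← Nat.cast_mul, Nat.choose_mul_choose_two_mul_sub, Nat.cast_sum, sum_mul]
  rw [sum_comm]
  refine sum_congr rfl fun k hk ↦ ?_
  rw [← sum_range_choose_mul_pow_of_le (mem_range_succ_iff.1 hk), mul_sum]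
  refine sum_congr rfl fun j _ ↦ ?_
  push_cast
  ring

theorem hanna_sum_three_eq_four (n : ℕ) :
    ∑ k ∈ range (n + 1), n.choose k * (2 * n - k).choose n * 3 ^ k
      = ∑ k ∈ range (n + 1), (n.choose k) ^ 2 * 4 ^ k := by
  simpa using sum_choose_mul_choose_two_mul_sub_mul_pow n (3 : ℕ)
end

section
/- For every natural number n: ∑_{k=0}^{n} C(n,k)^2 · 4^k = ∑_{k=0}^{⌊n/2⌋} C(n,2k) · C(2k,k) · 4^k · 5^(n−2k). -/
/-!
Write `C(n,k) = ∑ⱼ C(k,j) C(n-k,j)` (Vandermonde) and swap the sums. Choosing `k` out of `n`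
and then `j` out of each of the two parts amounts to choosing a `2j`-set, splitting it into
halves, and choosing the other `k - j` elements of the first part among the remaining `n - 2j`,
so
`C(n,k) C(k,j) C(n-k,j) = C(n,2j) C(2j,j) C(n-2j,k-j)`. The sum over `k` of the last factor
against `x^k` is `x^j (1+x)^(n-2j)` by the binomial theorem; at `x = 4` this is the claim.
-/

open Finset

theorem Nat.choose_mul_choose_sub_comm_s6 (N a b : ℕ) :
    N.choose a * (N - a).choose b = N.choose b * (N - b).choose a := by
  have ha := Nat.choose_mul (n := N) (Nat.le_add_right a b)
  have hb := Nat.choose_mul (n := N) (Nat.le_add_left b a)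
  rw [Nat.add_sub_cancel_left] at ha
  rw [Nat.add_sub_cancel] at hb
  rw [← ha, ← hb, Nat.choose_symm_add]

theorem Nat.choose_add_mul_choose_mul_choose_sub (n i j : ℕ) :
    n.choose (j + i) * (j + i).choose j * (n - (j + i)).choose j
      = n.choose (2 * j) * (2 * j).choose j * (n - 2 * j).choose i := by
  rw [Nat.choose_mul (Nat.le_add_right j i), Nat.choose_mul (by omega), Nat.add_sub_cancel_left,
    show 2 * j - j = j by omega, Nat.mul_assoc, ← Nat.sub_sub,
    Nat.choose_mul_choose_sub_comm_s6, Nat.sub_sub, ← Nat.two_mul, Nat.mul_assoc]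

theorem Nat.sum_range_choose_mul_choose_s6 (a b : ℕ) :
    ∑ i ∈ range (a + 1), a.choose i * b.choose i = (a + b).choose a := by
  rw [Nat.add_choose_eq, ← Nat.sum_antidiagonal_swap, Nat.sum_antidiagonal_eq_sum_range_succ_mk]
  refine sum_congr rfl fun i hi => ?_
  change _ = a.choose (a - i) * b.choose i
  rw [Nat.choose_symm (Nat.lt_succ_iff.mp (mem_range.mp hi))]

theorem Finset.sum_range_choose_mul_of_lt {R : Type*} [NonAssocSemiring R] (f : ℕ → R)
    {a N : ℕ} (h : a < N) :
    ∑ i ∈ range N, (a.choose i : R) * f i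
      = ∑ i ∈ range (a + 1), (a.choose i : R) * f i := by
  refine (sum_subset (range_subset_range.mpr h) fun i _ hia => ?_).symm
  rw [Nat.choose_eq_zero_of_lt (by simpa using hia), Nat.cast_zero, zero_mul]

section CommSemiring

variable {R : Type*} [CommSemiring R]

theorem sum_range_choose_mul_pow_of_lt (x : R) {m N : ℕ} (h : m < N) :
    ∑ i ∈ range N, (m.choose i : R) * x ^ i = (1 + x) ^ m := by
  rw [sum_range_choose_mul_of_lt _ h, add_comm 1 x, add_pow]
  refine sum_congr rfl fun i _ => ?_
  rw [one_pow, mul_one, mul_comm]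

theorem sum_range_choose_mul_choose_mul_choose_sub_mul_pow (x : R) {n j : ℕ} (hj : j ≤ n) :
    ∑ k ∈ range (n + 1), (n.choose k * k.choose j * (n - k).choose j : R) * x ^ k
      = (n.choose (2 * j) * (2 * j).choose j : R) * x ^ j * (1 + x) ^ (n - 2 * j) := by
  rw [show n + 1 = j + (n + 1 - j) by omega, sum_range_add,
    sum_eq_zero fun k hk => by rw [Nat.choose_eq_zero_of_lt (mem_range.mp hk)]; simp, zero_add,
    ← sum_range_choose_mul_pow_of_lt x (show n - 2 * j < n + 1 - j by omega), mul_sum]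
  refine sum_congr rfl fun i _ => ?_
  rw [← Nat.cast_mul, ← Nat.cast_mul, Nat.choose_add_mul_choose_mul_choose_sub, pow_add]
  push_cast
  ring

theorem sum_range_choose_sq_mul_pow (x : R) (n : ℕ) :
    ∑ k ∈ range (n + 1), (n.choose k : R) ^ 2 * x ^ k
      = ∑ j ∈ range (n / 2 + 1),
          (n.choose (2 * j) * (2 * j).choose j : R) * x ^ j * (1 + x) ^ (n - 2 * j) := by
  calc ∑ k ∈ range (n + 1), (n.choose k : R) ^ 2 * x ^ k
      = ∑ k ∈ range (n + 1), ∑ j ∈ range (n + 1),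
          (n.choose k * k.choose j * (n - k).choose j : R) * x ^ k := by
        refine sum_congr rfl fun k hk => ?_
        have hkn : k ≤ n := Nat.lt_succ_iff.mp (mem_range.mp hk)
        have vandermonde : ∑ j ∈ range (n + 1), (k.choose j * (n - k).choose j : R)
            = n.choose k := by
          rw [sum_range_choose_mul_of_lt _ (Nat.lt_succ_of_le hkn)]
          have h := Nat.sum_range_choose_mul_choose_s6 k (n - k)
          rw [Nat.add_sub_cancel' hkn] at h
          simpa using congrArg (Nat.cast (R := R)) h
        rw [← sum_mul]
        simp_rw [mul_assoc, ← mul_sum, vandermonde]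
        ring
    _ = ∑ j ∈ range (n + 1),
          (n.choose (2 * j) * (2 * j).choose j : R) * x ^ j * (1 + x) ^ (n - 2 * j) := by
        rw [sum_comm]
        exact sum_congr rfl fun j hj => sum_range_choose_mul_choose_mul_choose_sub_mul_pow x
          (Nat.lt_succ_iff.mp (mem_range.mp hj))
    _ = _ := by
        refine (sum_subset (range_subset_range.mpr (by omega)) fun j _ hj => ?_).symm
        rw [Nat.choose_eq_zero_of_lt (by simp at hj; omega)]
        simp

end CommSemiring

theorem hanna_sum_four_eq_five (n : ℕ) :
    ∑ k ∈ range (n + 1), (n.choose k) ^ 2 * 4 ^ k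
      = ∑ k ∈ range (n / 2 + 1), n.choose (2 * k) * (2 * k).choose k * 4 ^ k * 5 ^ (n - 2 * k) := by
  simpa using sum_range_choose_sq_mul_pow (4 : ℕ) n
end

section
/- For all natural numbers n and k with k ≤ n, the following identity of Andrews holds: ∑_{a=0}^{min(k, n−k)} C(k,a) · C(n−k,a) · C(n+k+a,n) = C(n+k,k) · C(n+k,n−k). (Equivalently, the sum may be taken over all a ≥ 0 since terms with a > min(k, n−k) vanish.) -/
/-!
With `s = n + k`, `x = k`, `y = n - k`, the identity is the case `y ≤ s` of
`∑ₐ C(x,a) C(y,a) C(s+a, x+y) = C(s,x) C(s,y)`. Expanding `C(s+a, x+y)` by Vandermonde in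
powers `C(a,j)` and summing over `a` first, the subset-of-a-subset identity and Vandermonde
again collapse `∑ₐ C(x,a) C(y,a) C(a,j)` to `C(y,j) C(x+y-j, y)`. Then
`C(s, x+y-j) C(x+y-j, y) = C(s,y) C(s-y, x-j)`, and a last Vandermonde sum over `j` gives
`C(s,y) C(s,x)`.
-/

open Finset

theorem Finset.sum_range_eq_of_eq_zero {M : Type*} [AddCommMonoid M] {f : ℕ → M} {m n : ℕ}
    (hmn : m ≤ n) (hf : ∀ i, m ≤ i → i < n → f i = 0) :
    ∑ i ∈ range n, f i = ∑ i ∈ range m, f i := by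
  refine (sum_subset (range_subset_range.2 hmn) fun i hin him => ?_).symm
  exact hf i (by simpa using him) (by simpa using hin)

theorem Nat.add_choose_eq_sum_range (p q m : ℕ) :
    (p + q).choose m = ∑ i ∈ range (m + 1), p.choose i * q.choose (m - i) := by
  rw [Nat.add_choose_eq, Finset.Nat.sum_antidiagonal_eq_sum_range_succ_mk]

theorem Nat.sum_choose_mul_choose_mul_choose (x y j : ℕ) :
    ∑ a ∈ range (x + 1), x.choose a * y.choose a * a.choose j
      = y.choose j * (x + y - j).choose y := by
  rcases lt_or_ge x j with hxj | hjx
  · have hrhs : y.choose j * (x + y - j).choose y = 0 := by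
      rcases lt_or_ge y j with hyj | hjy
      · rw [Nat.choose_eq_zero_of_lt hyj, zero_mul]
      · rw [Nat.choose_eq_zero_of_lt (by omega : x + y - j < y), mul_zero]
    rw [hrhs]
    exact sum_eq_zero fun a ha => by
      rw [Nat.choose_eq_zero_of_lt (by rw [mem_range] at ha; omega : a < j), mul_zero]
  obtain ⟨c, rfl⟩ := Nat.exists_eq_add_of_le hjx
  have hlow : ∑ a ∈ range j, (j + c).choose a * y.choose a * a.choose j = 0 :=
    sum_eq_zero fun a ha => by
      rw [Nat.choose_eq_zero_of_lt (n := a) (k := j) (mem_range.1 ha), mul_zero]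
  have hterm : ∀ i ∈ range (c + 1), (j + c).choose (j + i) * y.choose (j + i) * (j + i).choose j
      = y.choose j * ((y - j).choose i * (j + c).choose (c - i)) := fun i hi => by
    rw [mul_assoc, Nat.choose_mul (Nat.le_add_right j i), Nat.add_sub_cancel_left,
      Nat.choose_symm_of_eq_add (by rw [mem_range] at hi; omega : j + c = j + i + (c - i))]
    ring
  rw [add_assoc, sum_range_add, hlow, zero_add, sum_congr rfl hterm, ← mul_sum,
    ← Nat.add_choose_eq_sum_range]
  rcases le_or_gt j y with hjy | hyj
  · rw [show y - j + (j + c) = c + y by omega, show j + c + y - j = c + y by omega,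
      Nat.choose_symm_add]
  · rw [Nat.choose_eq_zero_of_lt hyj, zero_mul, zero_mul]

theorem Nat.sum_choose_mul_choose_mul_add_choose (x : ℕ) {y s : ℕ} (hys : y ≤ s) :
    ∑ a ∈ range (x + 1), x.choose a * y.choose a * (s + a).choose (x + y)
      = s.choose x * s.choose y := by
  calc ∑ a ∈ range (x + 1), x.choose a * y.choose a * (s + a).choose (x + y)
      = ∑ a ∈ range (x + 1), ∑ j ∈ range (x + y + 1),
          s.choose (x + y - j) * (x.choose a * y.choose a * a.choose j) := by
        refine sum_congr rfl fun a _ => ?_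
        rw [add_comm s, Nat.add_choose_eq_sum_range, mul_sum]
        exact sum_congr rfl fun j _ => by ring
    _ = ∑ j ∈ range (x + y + 1), s.choose (x + y - j) * (y.choose j * (x + y - j).choose y) := by
        rw [sum_comm]
        simp only [← mul_sum, Nat.sum_choose_mul_choose_mul_choose]
    _ = ∑ j ∈ range (x + 1), s.choose (x + y - j) * (y.choose j * (x + y - j).choose y) := by
        refine sum_range_eq_of_eq_zero (by omega) fun j hj _ => ?_
        rw [Nat.choose_eq_zero_of_lt (by omega : x + y - j < y), mul_zero, mul_zero]
    _ = s.choose y * ∑ j ∈ range (x + 1), y.choose j * (s - y).choose (x - j) := by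
        rw [mul_sum]
        refine sum_congr rfl fun j hj => ?_
        rw [mul_left_comm, Nat.choose_mul (by rw [mem_range] at hj; omega : y ≤ x + y - j),
          show x + y - j - y = x - j by omega]
        ring
    _ = s.choose x * s.choose y := by
        rw [← Nat.add_choose_eq_sum_range, Nat.add_sub_cancel' hys, mul_comm]

theorem andrews_identity (n k : ℕ) (hk : k ≤ n) :
    ∑ a ∈ range (min k (n - k) + 1), k.choose a * (n - k).choose a * (n + k + a).choose n
      = (n + k).choose k * (n + k).choose (n - k) := by
  obtain ⟨m, rfl⟩ := Nat.exists_eq_add_of_le hk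
  rw [Nat.add_sub_cancel_left, ← sum_range_eq_of_eq_zero (by omega : min k m + 1 ≤ k + 1)
    fun a _ ha => by rw [Nat.choose_eq_zero_of_lt (by omega : m < a), mul_zero, zero_mul]]
  exact Nat.sum_choose_mul_choose_mul_add_choose k (by omega)
end

section
/- For all natural numbers n and k with k ≤ n, the number of abelian squares (w, w') of size n over a 3-letter alphabet such that the letter 1 occurs exactly n−k times in w equals C(n,k)^2 · C(2k,k). Formally: the number of pairs of words w, w' : Fin n → Fin 3 such that every letter c ∈ Fin 3 occurs equally often in w and in w', and the number of positions i with w(i) = 0 is n−k, equals C(n,k)^2 · C(2k,k). -/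
/-!
Over a three-letter alphabet, two words of the same length are rearrangements of each other as
soon as they have equally many `0`s and equally many `1`s. Grouping the abelian squares by the
number `a` of `1`s, both words are chosen independently among the `C(n, k) C(k, a)` words with
`n - k` zeros and `a` ones, so the count is `C(n, k)² ∑ₐ C(k, a)² = C(n, k)² C(2k, k)`.
-/

open Finset

theorem Finset.card_filter_product_eq_sum_sq {ι κ : Type*} [DecidableEq κ] {f : ι → κ}
    {s : Finset ι} {t : Finset κ} (H : Set.MapsTo f s t) :
    #{p ∈ s ×ˢ s | f p.1 = f p.2} = ∑ b ∈ t, #{x ∈ s | f x = b} ^ 2 := by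
  rw [card_eq_sum_card_fiberwise (f := fun p => f p.1)
    fun p hp => H (mem_product.1 (mem_filter.1 hp).1).1]
  refine sum_congr rfl fun b _ => ?_
  rw [sq, ← card_product]
  congr 1
  ext ⟨x, y⟩
  simp only [mem_filter, mem_product]
  constructor
  · rintro ⟨⟨⟨hx, hy⟩, hxy⟩, rfl⟩
    exact ⟨⟨hx, rfl⟩, hy, hxy.symm⟩
  · rintro ⟨⟨hx, rfl⟩, hy, hxy⟩
    exact ⟨⟨⟨hx, hy⟩, hxy.symm⟩, rfl⟩

section TernaryWords

variable {α : Type*} [Fintype α]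

theorem card_fiber_zero_add_one_add_two (w : α → Fin 3) :
    #{i | w i = 0} + #{i | w i = 1} + #{i | w i = 2} = Fintype.card α := by
  simpa [Fin.sum_univ_three] using sum_card_fiberwise_eq_card_filter univ univ w

theorem letter_counts_eq_iff (w w' : α → Fin 3) :
    (∀ c, #{i | w i = c} = #{i | w' i = c}) ↔
      #{i | w i = 0} = #{i | w' i = 0} ∧ #{i | w i = 1} = #{i | w' i = 1} := by
  refine ⟨fun h => ⟨h 0, h 1⟩, fun ⟨h0, h1⟩ c => ?_⟩
  have hw := card_fiber_zero_add_one_add_two w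
  have hw' := card_fiber_zero_add_one_add_two w'
  fin_cases c <;> simp only [Fin.zero_eta, Fin.mk_one, Fin.reduceFinMk] <;> omega

variable [DecidableEq α]

def ternaryWord (A B : Finset α) (i : α) : Fin 3 :=
  if i ∈ A then 0 else if i ∈ B then 1 else 2

theorem filter_ternaryWord_eq_zero (A B : Finset α) :
    ({i | ternaryWord A B i = 0} : Finset α) = A := by
  ext i
  rw [mem_filter_univ, ternaryWord]
  split_ifs <;> simp_all

theorem filter_ternaryWord_eq_one {A B : Finset α} (h : Disjoint A B) :
    ({i | ternaryWord A B i = 1} : Finset α) = B := by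
  ext i
  rw [mem_filter_univ, ternaryWord]
  split_ifs <;> simp_all [disjoint_left.1 h]

theorem ternaryWord_filter_eq_zero_filter_eq_one (w : α → Fin 3) :
    ternaryWord {i | w i = 0} {i | w i = 1} = w := by
  funext i
  simp only [ternaryWord, mem_filter_univ]
  generalize w i = c
  fin_cases c <;> rfl

theorem card_ternary_words_with_counts (j a : ℕ) :
    #{w : α → Fin 3 | #{i | w i = 0} = j ∧ #{i | w i = 1} = a}
      = (Fintype.card α).choose j * (Fintype.card α - j).choose a := by
  have hpairs : #((powersetCard j (univ : Finset α)).sigma fun A => powersetCard a Aᶜ)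
      = (Fintype.card α).choose j * (Fintype.card α - j).choose a := by
    rw [card_sigma, sum_const_nat fun A hA => by
      rw [card_powersetCard, card_compl, mem_powersetCard_univ.1 hA], card_powersetCard, card_univ]
  rw [← hpairs]
  refine card_nbij' (fun w => ⟨({i | w i = 0} : Finset α), ({i | w i = 1} : Finset α)⟩)
    (fun p => ternaryWord p.1 p.2) (fun w hw => ?_) (fun p hp => ?_)
    (fun w _ => ternaryWord_filter_eq_zero_filter_eq_one w) (fun p hp => ?_)
  all_goals simp only [coe_filter, coe_sigma, Set.mem_sigma_iff, Set.mem_ofPred_eq, mem_coe,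
    mem_univ, mem_powersetCard, subset_univ, true_and, subset_compl_iff_disjoint_left] at *
  · exact ⟨hw.1, disjoint_filter.2 fun i _ h0 h1 => by simp [h0] at h1, hw.2⟩
  · rw [filter_ternaryWord_eq_zero, filter_ternaryWord_eq_one hp.2.1]
    exact ⟨hp.1, hp.2.2⟩
  · rw [filter_ternaryWord_eq_zero, filter_ternaryWord_eq_one hp.2.1]

end TernaryWords

theorem abelian_squares_count_by_ones_in_top_row (n k : ℕ) (hk : k ≤ n) :
    ((Finset.univ : Finset ((Fin n → Fin 3) × (Fin n → Fin 3))).filter (fun p =>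
        (∀ c : Fin 3,
          (Finset.univ.filter (fun i => p.1 i = c)).card
            = (Finset.univ.filter (fun i => p.2 i = c)).card) ∧
        (Finset.univ.filter (fun i => p.1 i = 0)).card = n - k)).card
      = (n.choose k) ^ 2 * (2 * k).choose k := by
  set W : Finset (Fin n → Fin 3) := {w | #{i | w i = 0} = n - k}
  have hsquares : ({p : (Fin n → Fin 3) × (Fin n → Fin 3) |
        (∀ c, #{i | p.1 i = c} = #{i | p.2 i = c}) ∧ #{i | p.1 i = 0} = n - k} : Finset _)
      = {p ∈ W ×ˢ W | #{i | p.1 i = 1} = #{i | p.2 i = 1}} := by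
    ext p
    simp only [W, mem_filter, mem_univ, true_and, mem_product, letter_counts_eq_iff]
    grind
  have hones : Set.MapsTo (fun w : Fin n → Fin 3 => #{i | w i = 1}) W (range (k + 1)) := by
    intro w hw
    have := card_fiber_zero_add_one_add_two w
    simp only [W, coe_filter, mem_univ, true_and, Set.mem_ofPred_eq, Fintype.card_fin] at hw this
    simp only [coe_range, Set.mem_Iio]
    omega
  have hrow (a : ℕ) : #{w ∈ W | #{i | w i = 1} = a} = n.choose k * k.choose a := by
    rw [filter_filter, card_ternary_words_with_counts, Fintype.card_fin, Nat.choose_symm hk,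
      Nat.sub_sub_self hk]
  rw [hsquares, card_filter_product_eq_sum_sq hones]
  simp only [hrow, mul_pow, ← mul_sum, Nat.sum_range_choose_sq]
end

section
/- For all natural numbers n and k with k ≤ n, the number of abelian squares (w, w') of size n over a 3-letter alphabet such that there are exactly n−k positions in which both w and w' have the letter 1 equals C(n,k) · ∑_{j=0}^{k} C(k,j)^3. Formally: the number of pairs of words w, w' : Fin n → Fin 3 such that every letter c ∈ Fin 3 occurs equally often in w and in w', and the number of positions i with w(i) = 0 and w'(i) = 0 is n−k, equals C(n,k) · ∑_{j=0}^{k} C(k,j)^3. -/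
/-!
Positions where both words carry the letter `0` form a set `S` with `|S| = n - k`. At each
other position the pair of letters is one of eight, so it can be coded by three bits, i.e. the
pair of words by three subsets `X, Y, Z` of the `k`-element complement of `S`. With a suitable
coding the differences between the letter counts of the two words are differences of `|X|`,
`|Y|`, `|Z|`, so the pair is an abelian square exactly when `|X| = |Y| = |Z|`. Choosing `S` and
then three `j`-subsets of its complement gives `C(n, k) * ∑ C(k, j) ^ 3`.
-/

open Finset

section EqualCardTriples

variable {α : Type*}

def equalCardTriples (C : Finset α) : Finset (Finset α × Finset α × Finset α) :=
  {q ∈ C.powerset ×ˢ C.powerset ×ˢ C.powerset | #q.1 = #q.2.1 ∧ #q.2.1 = #q.2.2}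

theorem card_equalCardTriples (C : Finset α) :
    #(equalCardTriples C) = ∑ j ∈ range (#C + 1), ((#C).choose j) ^ 3 := by
  have hmaps : Set.MapsTo (fun q : Finset α × Finset α × Finset α => #q.1) (equalCardTriples C)
      (range (#C + 1)) := by
    intro q hq
    simp only [equalCardTriples, coe_filter, mem_product, mem_powerset, Set.mem_ofPred_eq] at hq
    exact mem_range.2 (Nat.lt_succ_of_le (card_le_card hq.1.1))
  rw [card_eq_sum_card_fiberwise hmaps]
  refine sum_congr rfl fun j _ => ?_
  have hfiber : {q ∈ equalCardTriples C | #q.1 = j} =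
      C.powersetCard j ×ˢ C.powersetCard j ×ˢ C.powersetCard j := by
    ext ⟨X, Y, Z⟩
    simp only [equalCardTriples, mem_filter, mem_product, mem_powerset, mem_powersetCard]
    constructor
    · rintro ⟨⟨⟨hX, hY, hZ⟩, hXY, hYZ⟩, rfl⟩
      exact ⟨⟨hX, rfl⟩, ⟨hY, hXY.symm⟩, ⟨hZ, (hXY.trans hYZ).symm⟩⟩
    · rintro ⟨⟨hX, rfl⟩, ⟨hY, hXY⟩, ⟨hZ, hYZ⟩⟩
      exact ⟨⟨⟨hX, hY, hZ⟩, hXY.symm, hXY.trans hYZ.symm⟩, rfl⟩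
  rw [hfiber, card_product, card_product, card_powersetCard]
  ring

theorem card_sigma_equalCardTriples_compl [Fintype α] [DecidableEq α] {n k : ℕ}
    (hn : Fintype.card α = n) (hk : k ≤ n) :
    #((powersetCard (n - k) (univ : Finset α)).sigma fun S => equalCardTriples Sᶜ) =
      n.choose k * ∑ j ∈ range (k + 1), (k.choose j) ^ 3 := by
  have hfiber : ∀ S ∈ powersetCard (n - k) (univ : Finset α),
      #(equalCardTriples Sᶜ) = ∑ j ∈ range (k + 1), (k.choose j) ^ 3 := by
    intro S hS
    have hSc : #Sᶜ = k := by rw [card_compl, mem_powersetCard_univ.1 hS, hn]; omega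
    rw [card_equalCardTriples, hSc]
  rw [card_sigma, sum_congr rfl hfiber, sum_const, card_powersetCard, card_univ, hn,
    Nat.choose_symm hk, smul_eq_mul]

end EqualCardTriples

theorem card_filter_add_card_filter_eq {ι : Type*} (s : Finset ι) {P Q R T : ι → Prop}
    [DecidablePred P] [DecidablePred Q] [DecidablePred R] [DecidablePred T]
    (h : ∀ i ∈ s, (if P i then 1 else 0) + (if Q i then 1 else 0) =
      (if R i then 1 else 0) + (if T i then 1 else 0)) :
    #{i ∈ s | P i} + #{i ∈ s | Q i} = #{i ∈ s | R i} + #{i ∈ s | T i} := by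
  simp only [card_filter, ← sum_add_distrib]
  exact sum_congr rfl h

namespace AbelianSquare

/-- The coding of the eight pairs of letters other than `(0, 0)`: summed over the positions,
bit 1 minus bit 2 is the number of `2`s of the second word minus that of the first, and bit 2
minus bit 3 the same for the letter `1` (see `encode_indicator_two`, `encode_indicator_one`). -/
def encode (p : Fin 3 × Fin 3) : Bool × Bool × Bool :=
  (decide (p.1 ≠ 2 ∧ p.2 ≠ 0), decide (p.2 = 1 ∨ p = (2, 0)),
    decide (p.1 = 1 ∨ p = (2, 0)))

def decode : Bool × Bool × Bool → Fin 3 × Fin 3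
  | (true, true, true) => (1, 1)
  | (true, true, false) => (0, 1)
  | (true, false, true) => (1, 2)
  | (true, false, false) => (0, 2)
  | (false, true, true) => (2, 0)
  | (false, true, false) => (2, 1)
  | (false, false, true) => (1, 0)
  | (false, false, false) => (2, 2)

theorem encode_zero : encode (0, 0) = (false, false, false) := by decide

theorem decode_ne_zero : ∀ t, ¬((decode t).1 = 0 ∧ (decode t).2 = 0) := by decide

theorem encode_decode : ∀ t, encode (decode t) = t := by decide

theorem decode_encode :
    ∀ p : Fin 3 × Fin 3, ¬(p.1 = 0 ∧ p.2 = 0) → decode (encode p) = p := by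
  decide

theorem encode_indicator_two : ∀ a b : Fin 3,
    (if (encode (a, b)).1 then 1 else 0) + (if a = 2 then 1 else 0) =
      (if (encode (a, b)).2.1 then 1 else 0) + (if b = 2 then 1 else 0) := by
  decide

theorem encode_indicator_one : ∀ a b : Fin 3,
    (if (encode (a, b)).2.1 then 1 else 0) + (if a = 1 then 1 else 0) =
      (if (encode (a, b)).2.2 then 1 else 0) + (if b = 1 then 1 else 0) := by
  decide

section Words

variable {ι : Type*} [Fintype ι]

theorem card_add_card_add_card_eq (w : ι → Fin 3) :
    #{i | w i = 0} + #{i | w i = 1} + #{i | w i = 2} = Fintype.card ι := by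
  rw [← Fin.sum_univ_three (fun c => #{i | w i = c}), ← card_univ]
  exact (card_eq_sum_card_fiberwise fun _ _ => mem_coe.2 (mem_univ _)).symm

theorem forall_card_eq_iff_card_bits_eq (w w' : ι → Fin 3) :
    (∀ c : Fin 3, #{i | w i = c} = #{i | w' i = c}) ↔
      #{i | (encode (w i, w' i)).1} = #{i | (encode (w i, w' i)).2.1} ∧
        #{i | (encode (w i, w' i)).2.1} = #{i | (encode (w i, w' i)).2.2} := by
  have h₂ := card_filter_add_card_filter_eq univ fun i _ => encode_indicator_two (w i) (w' i)
  have h₁ := card_filter_add_card_filter_eq univ fun i _ => encode_indicator_one (w i) (w' i)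
  have hw := card_add_card_add_card_eq w
  have hw' := card_add_card_add_card_eq w'
  constructor
  · intro h
    have := h 1
    have := h 2
    omega
  · rintro ⟨hXY, hYZ⟩ c
    match c with
    | 0 => omega
    | 1 => omega
    | 2 => omega

variable [DecidableEq ι]

def encodeWords (p : (ι → Fin 3) × (ι → Fin 3)) :
    (_ : Finset ι) × Finset ι × Finset ι × Finset ι :=
  ⟨({i | p.1 i = 0 ∧ p.2 i = 0} : Finset ι),
    ({i | (encode (p.1 i, p.2 i)).1} : Finset ι),
    ({i | (encode (p.1 i, p.2 i)).2.1} : Finset ι),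
    ({i | (encode (p.1 i, p.2 i)).2.2} : Finset ι)⟩

def decodeLetters (q : (_ : Finset ι) × Finset ι × Finset ι × Finset ι) (i : ι) :
    Fin 3 × Fin 3 :=
  if i ∈ q.1 then (0, 0) else decode (i ∈ q.2.1, i ∈ q.2.2.1, i ∈ q.2.2.2)

def decodeWords (q : (_ : Finset ι) × Finset ι × Finset ι × Finset ι) :
    (ι → Fin 3) × (ι → Fin 3) :=
  (fun i => (decodeLetters q i).1, fun i => (decodeLetters q i).2)

theorem decodeWords_encodeWords (p : (ι → Fin 3) × (ι → Fin 3)) :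
    decodeWords (encodeWords p) = p := by
  have h : ∀ i, decodeLetters (encodeWords p) i = (p.1 i, p.2 i) := by
    intro i
    by_cases h0 : p.1 i = 0 ∧ p.2 i = 0
    · simp [decodeLetters, encodeWords, h0]
    · simp [decodeLetters, encodeWords, h0, decode_encode (p.1 i, p.2 i) h0]
  ext i <;> simp [decodeWords, h]

theorem encodeWords_decodeWords (q : (_ : Finset ι) × Finset ι × Finset ι × Finset ι)
    (hX : q.2.1 ⊆ q.1ᶜ) (hY : q.2.2.1 ⊆ q.1ᶜ) (hZ : q.2.2.2 ⊆ q.1ᶜ) :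
    encodeWords (decodeWords q) = q := by
  obtain ⟨S, X, Y, Z⟩ := q
  have hzero : ∀ i, (decodeLetters ⟨S, X, Y, Z⟩ i).1 = 0 ∧
      (decodeLetters ⟨S, X, Y, Z⟩ i).2 = 0 ↔ i ∈ S := by
    intro i
    by_cases hi : i ∈ S <;> simp [decodeLetters, hi, decode_ne_zero]
  have hbits : ∀ i, encode (decodeLetters ⟨S, X, Y, Z⟩ i) =
      (decide (i ∈ X), decide (i ∈ Y), decide (i ∈ Z)) := by
    intro i
    by_cases hi : i ∈ S
    · have hXYZ : i ∉ X ∧ i ∉ Y ∧ i ∉ Z :=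
        ⟨fun h => mem_compl.1 (hX h) hi, fun h => mem_compl.1 (hY h) hi,
          fun h => mem_compl.1 (hZ h) hi⟩
      simp [decodeLetters, hi, hXYZ, encode_zero]
    · simp [decodeLetters, hi, encode_decode]
  refine Sigma.ext ?_ (heq_of_eq ?_)
  · ext i
    simp only [encodeWords, mem_filter, mem_univ, true_and]
    exact hzero i
  · ext i <;> simp only [encodeWords, mem_filter, mem_univ, true_and] <;> simp [decodeWords, hbits]

theorem encodeWords_mem_sigma_iff (p : (ι → Fin 3) × (ι → Fin 3)) (m : ℕ) :
    encodeWords p ∈ (powersetCard m univ).sigma (fun S => equalCardTriples Sᶜ) ↔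
      (∀ c : Fin 3, #{i | p.1 i = c} = #{i | p.2 i = c}) ∧
        #{i | p.1 i = 0 ∧ p.2 i = 0} = m := by
  have hcompl : ∀ f : Bool × Bool × Bool → Bool, f (false, false, false) = false →
      ({i | f (encode (p.1 i, p.2 i))} : Finset ι) ⊆
        ({i | p.1 i = 0 ∧ p.2 i = 0} : Finset ι)ᶜ := by
    intro f hf i hi
    simp only [mem_compl, mem_filter, mem_univ, true_and] at hi ⊢
    rintro ⟨h1, h2⟩
    simp [h1, h2, encode_zero, hf] at hi
  simp only [encodeWords, mem_sigma, mem_powersetCard_univ, equalCardTriples, mem_filter,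
    mem_product, mem_powerset, forall_card_eq_iff_card_bits_eq]
  have := hcompl (·.1) rfl
  have := hcompl (·.2.1) rfl
  have := hcompl (·.2.2) rfl
  tauto

theorem card_abelianSquares_eq_card_sigma (m : ℕ) :
    #{p : (ι → Fin 3) × (ι → Fin 3) |
        (∀ c : Fin 3, #{i | p.1 i = c} = #{i | p.2 i = c}) ∧
          #{i | p.1 i = 0 ∧ p.2 i = 0} = m} =
      #((powersetCard m (univ : Finset ι)).sigma fun S => equalCardTriples Sᶜ) := by
  have hencode_decode :
      ∀ q ∈ (powersetCard m (univ : Finset ι)).sigma (fun S => equalCardTriples Sᶜ),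
        encodeWords (decodeWords q) = q := by
    intro q hq
    simp only [mem_sigma, equalCardTriples, mem_filter, mem_product, mem_powerset] at hq
    exact encodeWords_decodeWords q hq.2.1.1 hq.2.1.2.1 hq.2.1.2.2
  refine card_nbij' encodeWords decodeWords ?_ ?_ ?_ hencode_decode
  · intro p hp
    rw [mem_coe, mem_filter] at hp
    rw [mem_coe, encodeWords_mem_sigma_iff]
    exact hp.2
  · intro q hq
    rw [mem_coe, ← hencode_decode q hq, encodeWords_mem_sigma_iff] at hq
    rw [mem_coe, mem_filter]
    exact ⟨mem_univ _, hq⟩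
  · intro p _
    exact decodeWords_encodeWords p

end Words

end AbelianSquare

theorem abelian_squares_count_by_common_ones (n k : ℕ) (hk : k ≤ n) :
    ((Finset.univ : Finset ((Fin n → Fin 3) × (Fin n → Fin 3))).filter (fun p =>
        (∀ c : Fin 3,
          (Finset.univ.filter (fun i => p.1 i = c)).card
            = (Finset.univ.filter (fun i => p.2 i = c)).card) ∧
        (Finset.univ.filter (fun i => p.1 i = 0 ∧ p.2 i = 0)).card = n - k)).card
      = n.choose k * ∑ j ∈ range (k + 1), (k.choose j) ^ 3 := by
  rw [AbelianSquare.card_abelianSquares_eq_card_sigma,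
    card_sigma_equalCardTriples_compl (Fintype.card_fin n) hk]
end

section
/- For every natural number n, the total number of abelian squares of size n over a 3-letter alphabet equals ∑_{k=0}^{n} C(n,k)^2 · C(2k,k). Formally: the number of pairs of words w, w' : Fin n → Fin 3 such that every letter c ∈ Fin 3 occurs equally often in w and in w' equals ∑_{k=0}^{n} C(n,k)^2 · C(2k,k). -/
/-!
Pairs of words with the same letter counts split according to the common count vector, so
their number is the sum of the squared fibre sizes of the map "word ↦ letter counts". A ternary
word `w` is the same as a nested pair of sets `{w ≠ 2} ⊇ {w = 0}`; for sizes `k ≥ a` there are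
`C(n, k) C(k, a)` such pairs, and the inner sum `∑ₐ C(k, a)²` is `C(2k, k)` by Vandermonde.
-/

open Finset

theorem card_filter_fst_eq_snd_eq_sum_sq {α β : Type*} [DecidableEq β] (s : Finset α)
    (t : Finset β) (f : α → β) (hf : ∀ x ∈ s, f x ∈ t) :
    #{p ∈ s ×ˢ s | f p.1 = f p.2} = ∑ b ∈ t, #{x ∈ s | f x = b} ^ 2 := by
  rw [card_eq_sum_card_fiberwise (f := fun p => f p.1) (t := t)
    fun p hp => hf _ (mem_product.1 (mem_filter.1 hp).1).1]
  refine sum_congr rfl fun b _ => ?_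
  rw [sq, ← card_product, filter_filter, ← filter_product]
  congr 1
  refine filter_congr fun p _ => ⟨?_, ?_⟩
  · rintro ⟨h, rfl⟩
    exact ⟨rfl, h.symm⟩
  · rintro ⟨h₁, h₂⟩
    exact ⟨h₁.trans h₂.symm, h₁⟩

theorem card_sigma_powersetCard_powersetCard {α : Type*} (s : Finset α) (k a : ℕ) :
    #((powersetCard k s).sigma fun S => powersetCard a S) = (#s).choose k * k.choose a := by
  rw [card_sigma, sum_congr rfl fun S hS => by rw [card_powersetCard, (mem_powersetCard.1 hS).2],
    sum_const, card_powersetCard, smul_eq_mul]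

namespace TernaryWord

variable {ι : Type*} [Fintype ι]

theorem card_filter_ne_two_add_card_filter_eq_two (w : ι → Fin 3) :
    #{i | w i ≠ 2} + #{i | w i = 2} = Fintype.card ι := by
  rw [add_comm]
  exact card_filter_add_card_filter_not _

theorem filter_eq_zero_subset_filter_ne_two (w : ι → Fin 3) :
    ({i | w i = 0} : Finset ι) ⊆ ({i | w i ≠ 2} : Finset ι) :=
  monotone_filter_right _ fun i _ (h : w i = 0) => by simp [h]

/-- A sigma type rather than a product, so that the possible shapes form a `Finset.sigma`. -/
def shape (w : ι → Fin 3) : Σ _ : ℕ, ℕ := ⟨#{i | w i ≠ 2}, #{i | w i = 0}⟩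

theorem shape_mem_sigma (w : ι → Fin 3) :
    shape w ∈ (range (Fintype.card ι + 1)).sigma fun k => range (k + 1) := by
  simp only [shape, mem_sigma, mem_range, Nat.lt_succ_iff]
  exact ⟨(card_filter_le _ _).trans_eq card_univ,
    card_le_card (filter_eq_zero_subset_filter_ne_two w)⟩

variable [DecidableEq ι]

theorem card_filter_ne_two (w : ι → Fin 3) :
    #{i | w i ≠ 2} = #{i | w i = 0} + #{i | w i = 1} := by
  rw [← card_union_of_disjoint (disjoint_filter.2 fun i _ h₀ h₁ => by simp [h₀] at h₁),
    ← filter_or]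
  exact congrArg card (filter_congr fun i _ => by omega)

theorem forall_card_filter_eq_iff_shape_eq (w w' : ι → Fin 3) :
    (∀ c, #{i | w i = c} = #{i | w' i = c}) ↔ shape w = shape w' := by
  have h₁ := card_filter_ne_two w
  have h₁' := card_filter_ne_two w'
  have h₂ := card_filter_ne_two_add_card_filter_eq_two w
  have h₂' := card_filter_ne_two_add_card_filter_eq_two w'
  simp only [shape, Sigma.mk.injEq, heq_eq_eq]
  constructor
  · intro h
    exact ⟨by rw [h₁, h₁', h 0, h 1], h 0⟩
  · rintro ⟨hne, h₀⟩ c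
    fin_cases c
    · exact h₀
    · change #{i | w i = 1} = #{i | w' i = 1}
      omega
    · change #{i | w i = 2} = #{i | w' i = 2}
      omega

def ofSubsets (S A : Finset ι) (i : ι) : Fin 3 := if i ∈ A then 0 else if i ∈ S then 1 else 2

theorem ofSubsets_filter (w : ι → Fin 3) : ofSubsets {i | w i ≠ 2} {i | w i = 0} = w := by
  funext i
  simp only [ofSubsets, mem_filter, mem_univ, true_and]
  split_ifs <;> omega

theorem filter_ofSubsets_ne_two {S A : Finset ι} (h : A ⊆ S) :
    ({i | ofSubsets S A i ≠ 2} : Finset ι) = S := by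
  ext i
  simp only [mem_filter, mem_univ, true_and]
  unfold ofSubsets
  split_ifs with hA hS
  · simp [h hA]
  · simp [hS]
  · simp [hS]

theorem filter_ofSubsets_eq_zero (S A : Finset ι) :
    ({i | ofSubsets S A i = 0} : Finset ι) = A := by
  ext i
  simp only [mem_filter, mem_univ, true_and]
  unfold ofSubsets
  split_ifs with hA <;> simp [hA]

theorem card_filter_shape_eq (k a : ℕ) :
    #{w : ι → Fin 3 | shape w = ⟨k, a⟩} = (Fintype.card ι).choose k * k.choose a := by
  rw [← card_univ, ← card_sigma_powersetCard_powersetCard]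
  refine card_bij' (fun w _ => ⟨({i | w i ≠ 2} : Finset ι), ({i | w i = 0} : Finset ι)⟩)
    (fun p _ => ofSubsets p.1 p.2) ?_ ?_ (fun w _ => ofSubsets_filter w) ?_
  · intro w hw
    simp only [mem_filter, mem_univ, true_and, shape, Sigma.mk.injEq, heq_eq_eq] at hw
    simp only [mem_sigma, mem_powersetCard, subset_univ, true_and, hw, and_true]
    exact filter_eq_zero_subset_filter_ne_two w
  · rintro ⟨S, A⟩ hSA
    simp only [mem_sigma, mem_powersetCard] at hSA
    obtain ⟨⟨-, hS⟩, hAS, hA⟩ := hSA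
    simp [shape, filter_ofSubsets_ne_two hAS, filter_ofSubsets_eq_zero, hS, hA]
  · rintro ⟨S, A⟩ hSA
    simp only [mem_sigma, mem_powersetCard] at hSA
    rw [filter_ofSubsets_ne_two hSA.2.1, filter_ofSubsets_eq_zero]

end TernaryWord

open TernaryWord in
theorem abelian_squares_total_count (n : ℕ) :
    ((Finset.univ : Finset ((Fin n → Fin 3) × (Fin n → Fin 3))).filter (fun p =>
        ∀ c : Fin 3,
          (Finset.univ.filter (fun i => p.1 i = c)).card
            = (Finset.univ.filter (fun i => p.2 i = c)).card)).card
      = ∑ k ∈ range (n + 1), (n.choose k) ^ 2 * (2 * k).choose k := by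
  have hshape (w : Fin n → Fin 3) : shape w ∈ (range (n + 1)).sigma fun k => range (k + 1) := by
    simpa using shape_mem_sigma w
  calc _ = #{p ∈ univ ×ˢ univ | shape p.1 = shape p.2} := by
        simp only [univ_product_univ, forall_card_filter_eq_iff_shape_eq]
    _ = ∑ x ∈ (range (n + 1)).sigma fun k => range (k + 1), #{w | shape w = x} ^ 2 :=
        card_filter_fst_eq_snd_eq_sum_sq univ _ shape fun w _ => hshape w
    _ = ∑ k ∈ range (n + 1), ∑ a ∈ range (k + 1), (n.choose k * k.choose a) ^ 2 := by
        simp only [sum_sigma, card_filter_shape_eq, Fintype.card_fin]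
    _ = _ := by simp_rw [mul_pow, ← mul_sum, Nat.sum_range_choose_sq]
end

section
/- For every natural number n, the number of abelian squares (w, w') of size n over a 3-letter alphabet with no position at which both w and w' have the letter 1 equals the n-th Franel number ∑_{k=0}^{n} C(n,k)^3. Formally: the number of pairs of words w, w' : Fin n → Fin 3 such that every letter c ∈ Fin 3 occurs equally often in w and in w', and there is no position i with w(i) = 0 and w'(i) = 0, equals ∑_{k=0}^{n} C(n,k)^3. -/
/-!
A pair of words without a common `0` has one of the eight letter pairs other than `(0, 0)` at
each position, so it can be recorded by three bits per position, i.e. by three subsets `X, Y, Z`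
of positions. The bits are chosen so that, position by position,
`[x] - [y] = [a = 0] - [b = 0]` and `[y] - [z] = [a = 1] - [b = 1]`. Summing over positions,
`|X| - |Y|` and `|Y| - |Z|` are the differences of the numbers of `0`s and of `1`s in the two
words, so abelian squares correspond exactly to triples with `|X| = |Y| = |Z|`, and there are
`∑ₖ C(n, k) ^ 3` of those.
-/

open Finset

theorem card_filter_sub_card_filter_eq {ι : Type*} {s : Finset ι} {p q r t : ι → Prop}
    [DecidablePred p] [DecidablePred q] [DecidablePred r] [DecidablePred t]
    (h : ∀ i ∈ s, ((if p i then 1 else 0 : ℤ) - if q i then 1 else 0) =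
      (if r i then 1 else 0) - if t i then 1 else 0) :
    (#{i ∈ s | p i} : ℤ) - #{i ∈ s | q i} = #{i ∈ s | r i} - #{i ∈ s | t i} := by
  simp only [natCast_card_filter, ← sum_sub_distrib]
  exact sum_congr rfl h

theorem forall_card_fiber_eq_iff_fin_three {ι : Type*} [Fintype ι] (w w' : ι → Fin 3) :
    (∀ c, #{i | w i = c} = #{i | w' i = c}) ↔
      #{i | w i = 0} = #{i | w' i = 0} ∧ #{i | w i = 1} = #{i | w' i = 1} := by
  have sum_fibers (v : ι → Fin 3) :
      #{i | v i = 0} + #{i | v i = 1} + #{i | v i = 2} = Fintype.card ι := by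
    rw [← Fin.sum_univ_three (fun c => #{i | v i = c}), ← card_univ]
    exact (card_eq_sum_card_fiberwise fun i _ => mem_univ (v i)).symm
  refine ⟨fun h => ⟨h 0, h 1⟩, fun ⟨h0, h1⟩ c => ?_⟩
  match c with
  | 0 => exact h0
  | 1 => exact h1
  | 2 => have := sum_fibers w; have := sum_fibers w'; omega

theorem card_triples_with_equal_card (α : Type*) [Fintype α] [DecidableEq α] :
    #{t : Finset α × Finset α × Finset α | #t.1 = #t.2.1 ∧ #t.2.1 = #t.2.2} =
      ∑ k ∈ range (Fintype.card α + 1), (Fintype.card α).choose k ^ 3 := by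
  rw [card_eq_sum_card_fiberwise (f := fun t => #t.1) (t := range (Fintype.card α + 1))
    fun t _ => mem_range_succ_iff.2 (card_le_univ t.1)]
  refine sum_congr rfl fun k _ => ?_
  have fiber_eq : filter (fun t => #t.1 = k)
      {t : Finset α × Finset α × Finset α | #t.1 = #t.2.1 ∧ #t.2.1 = #t.2.2} =
        powersetCard k univ ×ˢ powersetCard k univ ×ˢ powersetCard k univ := by
    ext t
    simp only [mem_filter, mem_univ, true_and, mem_product, mem_powersetCard_univ]
    omega
  rw [fiber_eq, card_product, card_product, card_powersetCard, card_univ]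
  ring

namespace NoCommonZero

def pairToBits (a b : Fin 3) : Bool × Bool × Bool :=
  (a = 0 ∨ b = 2, a ≠ 0 ∧ b ≠ 1, a = 2 ∨ a = 0 ∧ b = 1)

def bitsToPair : Bool × Bool × Bool → Fin 3 × Fin 3
  | (true, false, true) => (0, 1)
  | (true, false, false) => (0, 2)
  | (false, true, false) => (1, 0)
  | (false, true, true) => (2, 0)
  | (false, false, false) => (1, 1)
  | (true, true, true) => (2, 2)
  | (true, true, false) => (1, 2)
  | (false, false, true) => (2, 1)

theorem bitsToPair_pairToBits : ∀ a b : Fin 3, ¬(a = 0 ∧ b = 0) →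
    bitsToPair (pairToBits a b) = (a, b) := by
  decide

theorem pairToBits_bitsToPair : ∀ t, pairToBits (bitsToPair t).1 (bitsToPair t).2 = t := by
  decide

theorem bitsToPair_not_zero_zero : ∀ t, ¬((bitsToPair t).1 = 0 ∧ (bitsToPair t).2 = 0) := by
  decide

theorem pairToBits_fst_sub_snd : ∀ a b : Fin 3, ¬(a = 0 ∧ b = 0) →
    ((if (pairToBits a b).1 then 1 else 0 : ℤ) - if (pairToBits a b).2.1 then 1 else 0) =
      (if a = 0 then 1 else 0) - if b = 0 then 1 else 0 := by
  decide

theorem pairToBits_snd_sub_thd : ∀ a b : Fin 3, ¬(a = 0 ∧ b = 0) →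
    ((if (pairToBits a b).2.1 then 1 else 0 : ℤ) - if (pairToBits a b).2.2 then 1 else 0) =
      (if a = 1 then 1 else 0) - if b = 1 then 1 else 0 := by
  decide

variable {ι : Type*}

section OfSubsets

variable [DecidableEq ι]

def ofSubsets (t : Finset ι × Finset ι × Finset ι) : (ι → Fin 3) × (ι → Fin 3) :=
  (fun i => (bitsToPair (i ∈ t.1, i ∈ t.2.1, i ∈ t.2.2)).1,
    fun i => (bitsToPair (i ∈ t.1, i ∈ t.2.1, i ∈ t.2.2)).2)

theorem ofSubsets_not_exists_zero_zero (t : Finset ι × Finset ι × Finset ι) :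
    ¬∃ i, (ofSubsets t).1 i = 0 ∧ (ofSubsets t).2 i = 0 :=
  fun ⟨_, h⟩ => bitsToPair_not_zero_zero _ h

end OfSubsets

variable [Fintype ι]

def toSubsets (p : (ι → Fin 3) × (ι → Fin 3)) : Finset ι × Finset ι × Finset ι :=
  (univ.filter fun i => (pairToBits (p.1 i) (p.2 i)).1,
    univ.filter fun i => (pairToBits (p.1 i) (p.2 i)).2.1,
    univ.filter fun i => (pairToBits (p.1 i) (p.2 i)).2.2)

theorem forall_card_fiber_eq_iff_card_toSubsets {p : (ι → Fin 3) × (ι → Fin 3)}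
    (hp : ¬∃ i, p.1 i = 0 ∧ p.2 i = 0) :
    (∀ c, #{i | p.1 i = c} = #{i | p.2 i = c}) ↔
      #(toSubsets p).1 = #(toSubsets p).2.1 ∧ #(toSubsets p).2.1 = #(toSubsets p).2.2 := by
  have h0 : (#(toSubsets p).1 : ℤ) - #(toSubsets p).2.1 = #{i | p.1 i = 0} - #{i | p.2 i = 0} :=
    card_filter_sub_card_filter_eq fun i _ => pairToBits_fst_sub_snd _ _ fun h => hp ⟨i, h⟩
  have h1 : (#(toSubsets p).2.1 : ℤ) - #(toSubsets p).2.2 =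
      #{i | p.1 i = 1} - #{i | p.2 i = 1} :=
    card_filter_sub_card_filter_eq fun i _ => pairToBits_snd_sub_thd _ _ fun h => hp ⟨i, h⟩
  rw [forall_card_fiber_eq_iff_fin_three]
  omega

variable [DecidableEq ι]

theorem ofSubsets_toSubsets {p : (ι → Fin 3) × (ι → Fin 3)}
    (hp : ¬∃ i, p.1 i = 0 ∧ p.2 i = 0) : ofSubsets (toSubsets p) = p := by
  have h i := bitsToPair_pairToBits (p.1 i) (p.2 i) fun h => hp ⟨i, h⟩
  ext i <;> simp [ofSubsets, toSubsets, h]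

theorem toSubsets_ofSubsets (t : Finset ι × Finset ι × Finset ι) :
    toSubsets (ofSubsets t) = t := by
  have h i := pairToBits_bitsToPair (i ∈ t.1, i ∈ t.2.1, i ∈ t.2.2)
  ext i <;> simp [ofSubsets, toSubsets, h]

theorem card_abelianSquares_eq_card_triples_with_equal_card :
    #{p : (ι → Fin 3) × (ι → Fin 3) | (∀ c : Fin 3, #{i | p.1 i = c} = #{i | p.2 i = c}) ∧
        ¬∃ i, p.1 i = 0 ∧ p.2 i = 0} =
      #{t : Finset ι × Finset ι × Finset ι | #t.1 = #t.2.1 ∧ #t.2.1 = #t.2.2} := by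
  refine card_nbij' toSubsets ofSubsets ?_ ?_ ?_ ?_
  · intro p hp
    simp only [mem_coe, mem_filter, mem_univ, true_and] at hp ⊢
    exact (forall_card_fiber_eq_iff_card_toSubsets hp.2).1 hp.1
  · intro t ht
    simp only [mem_coe, mem_filter, mem_univ, true_and] at ht ⊢
    have hno := ofSubsets_not_exists_zero_zero t
    refine ⟨(forall_card_fiber_eq_iff_card_toSubsets hno).2 ?_, hno⟩
    rwa [toSubsets_ofSubsets]
  · intro p hp
    simp only [mem_coe, mem_filter, mem_univ, true_and] at hp
    exact ofSubsets_toSubsets hp.2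
  · intro t _
    exact toSubsets_ofSubsets t

end NoCommonZero

theorem abelian_squares_no_common_one_eq_franel (n : ℕ) :
    ((Finset.univ : Finset ((Fin n → Fin 3) × (Fin n → Fin 3))).filter (fun p =>
        (∀ c : Fin 3,
          (Finset.univ.filter (fun i => p.1 i = c)).card
            = (Finset.univ.filter (fun i => p.2 i = c)).card) ∧
        ¬ ∃ i : Fin n, p.1 i = 0 ∧ p.2 i = 0)).card
      = ∑ k ∈ range (n + 1), (n.choose k) ^ 3 := by
  have h := NoCommonZero.card_abelianSquares_eq_card_triples_with_equal_card (ι := Fin n)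
  rw [card_triples_with_equal_card, Fintype.card_fin] at h
  -- the `Decidable` instances inferred for `Fin n` differ from the generic ones
  convert h
end

section
/- For all natural numbers n and k with k ≤ n, the number of Hanna n-matrices having exactly n−k columns equal to (1,1) (i.e., both entries equal to the letter 1) equals C(n,k) · C(2k,k) · 2^k. Formally: the number of pairs of words w, w' : Fin n → Fin 3 such that the letter 0 occurs equally often in w and in w', and the number of positions i with w(i) = 0 and w'(i) = 0 is n−k, equals C(n,k) · C(2k,k) · 2^k. -/
/-!
Read a Hanna matrix as a word of columns and give the column `(a, b)` the bivariate monomial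
`X ^ [a = 0 ∧ b = 0] * Y ^ ([a = 0] + [b ≠ 0])`. The `Y`-degree of a word is
`#(zeros on top) + n - #(zeros at the bottom)`, so the matrices we count are the words of
`X`-degree `n - k` and `Y`-degree `n`. Summing over the nine columns gives
`X * Y + 2 * (Y + 1) ^ 2`, and by the binomial theorem the coefficient of `X ^ (n - k) * Y ^ n`
in its `n`-th power is `C(n, k)` times the coefficient of `Y ^ k` in `2 ^ k * (Y + 1) ^ (2 * k)`.
In `ℕ[X][X]`, `Y` is the inner variable `C X`.
-/

open Finset Polynomial

theorem coeff_pow_sum_C_mul_X_pow {R α : Type*} [CommSemiring R] [Fintype α]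
    (c : α → R) (e : α → ℕ) (n m : ℕ) :
    ((∑ a, C (c a) * X ^ e a) ^ n).coeff m
      = ∑ f : Fin n → α with ∑ i, e (f i) = m, ∏ i, c (f i) := by
  rw [Fintype.sum_pow, finsetSum_coeff, sum_filter]
  refine sum_congr rfl fun f _ => ?_
  rw [prod_mul_distrib, ← map_prod, prod_pow_eq_pow_sum, coeff_C_mul_X_pow]
  exact if_congr eq_comm rfl rfl

theorem card_filter_sum_eq_and_sum_eq {α : Type*} [Fintype α] (e d : α → ℕ) (n p q : ℕ) :
    #{f : Fin n → α | ∑ i, e (f i) = p ∧ ∑ i, d (f i) = q}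
      = (((∑ a, C (X ^ d a) * X ^ e a : ℕ[X][X]) ^ n).coeff p).coeff q := by
  rw [coeff_pow_sum_C_mul_X_pow, finsetSum_coeff, ← filter_filter, card_eq_sum_ones, sum_filter]
  refine sum_congr rfl fun f _ => ?_
  rw [prod_pow_eq_pow_sum, coeff_X_pow]
  exact if_congr eq_comm rfl rfl

theorem coeff_C_mul_X_add_C_pow {R : Type*} [CommSemiring R] (a b : R) (n j : ℕ) :
    ((C a * X + C b) ^ n).coeff j = a ^ j * b ^ (n - j) * n.choose j := by
  have hterm (i : ℕ) : (C a * X) ^ i * C b ^ (n - i) * (n.choose i : R[X])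
      = C (a ^ i * b ^ (n - i) * n.choose i) * X ^ i := by
    simp only [map_mul, map_pow, map_natCast]
    ring
  simp only [add_pow, hterm, finsetSum_coeff, coeff_C_mul_X_pow, sum_ite_eq, mem_range]
  split_ifs with hj
  · rfl
  · rw [Nat.choose_eq_zero_of_lt (by omega), Nat.cast_zero, mul_zero]

theorem coeff_two_mul_X_add_one_sq_pow (k : ℕ) :
    ((2 * (X + 1) ^ 2 : ℕ[X]) ^ k).coeff k = (2 * k).choose k * 2 ^ k := by
  rw [mul_pow, ← pow_mul, ← C_ofNat, ← C_pow, coeff_C_mul, coeff_X_add_one_pow, mul_comm 2 k,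
    mul_comm, Nat.cast_id]

namespace HannaMatrix

def isZeroZero (c : Fin 3 × Fin 3) : ℕ :=
  if c.1 = 0 ∧ c.2 = 0 then 1 else 0

def zeroBalance (c : Fin 3 × Fin 3) : ℕ :=
  (if c.1 = 0 then 1 else 0) + (if c.2 = 0 then 0 else 1)

theorem sum_isZeroZero {n : ℕ} (w w' : Fin n → Fin 3) :
    ∑ i, isZeroZero (w i, w' i) = #{i | w i = 0 ∧ w' i = 0} := by
  simp only [isZeroZero, sum_boole, Nat.cast_id]

theorem sum_zeroBalance_eq_iff {n : ℕ} (w w' : Fin n → Fin 3) :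
    ∑ i, zeroBalance (w i, w' i) = n ↔ #{i | w i = 0} = #{i | w' i = 0} := by
  have hsplit := card_filter_add_card_filter_not (s := univ) (fun i => w' i = 0)
  simp only [zeroBalance, sum_add_distrib, sum_boole, sum_ite, sum_const_zero, zero_add,
    card_univ, Fintype.card_fin, Nat.cast_id, smul_eq_mul, mul_one, sum_const] at hsplit ⊢
  omega

theorem sum_C_X_pow_zeroBalance_mul_X_pow_isZeroZero :
    ∑ c, C (X ^ zeroBalance c) * X ^ isZeroZero c = C X * X + C (2 * (X + 1) ^ 2 : ℕ[X]) := by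
  simp [Fintype.sum_prod_type, Fin.sum_univ_three, zeroBalance, isZeroZero, map_ofNat]
  ring

end HannaMatrix

open HannaMatrix in
theorem hanna_matrices_count_by_one_one_columns (n k : ℕ) (hk : k ≤ n) :
    ((Finset.univ : Finset ((Fin n → Fin 3) × (Fin n → Fin 3))).filter (fun p =>
        (Finset.univ.filter (fun i => p.1 i = 0)).card
          = (Finset.univ.filter (fun i => p.2 i = 0)).card ∧
        (Finset.univ.filter (fun i => p.1 i = 0 ∧ p.2 i = 0)).card = n - k)).card
      = n.choose k * (2 * k).choose k * 2 ^ k := by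
  calc _ = #{f : Fin n → Fin 3 × Fin 3 |
          ∑ i, isZeroZero (f i) = n - k ∧ ∑ i, zeroBalance (f i) = n} := by
        refine card_equiv (Equiv.arrowProdEquivProdArrow _ _ _).symm fun p => ?_
        simp only [mem_filter, mem_univ, true_and, Equiv.arrowProdEquivProdArrow_symm_apply,
          sum_isZeroZero, sum_zeroBalance_eq_iff, and_comm]
    _ = (X ^ (n - k) * (2 * (X + 1) ^ 2) ^ (n - (n - k)) * (n.choose (n - k) : ℕ[X])).coeff n :=
        by rw [card_filter_sum_eq_and_sum_eq, sum_C_X_pow_zeroBalance_mul_X_pow_isZeroZero,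
             coeff_C_mul_X_add_C_pow]
    _ = n.choose k * (2 * k).choose k * 2 ^ k := by
        rw [Nat.sub_sub_self hk, Nat.choose_symm hk, ← C_eq_natCast, coeff_mul_C,
          coeff_X_pow_mul', if_pos (Nat.sub_le n k), Nat.sub_sub_self hk,
          coeff_two_mul_X_add_one_sq_pow, Nat.cast_id]
        ring
end
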